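/- For β > 2, the function Z(γ) = γ^{2/β}·∫_{γ^{−2/β}}^∞ dy/(1 + y^{β/2}) (for γ > 0, with Z(0)=0) is continuous, strictly increasing on [0,∞), satisfies Z(γ) ≤ Γ(1+2/β)Γ(1−2/β)·γ^{2/β} for all γ ≥ 0, and Z(γ)/γ^{2/β} → Γ(1+2/β)Γ(1−2/β) as γ → ∞. -/

import Mathlib

open MeasureTheory Set Real Filter

/-- The guard-zone interference exponent Z(γ) = γ^{2/β} ∫_{γ^{-2/β}}^∞ dy/(1+y^{β/2})
(which equals 0 at γ = 0 since 0^{2/β} = 0). -/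
noncomputable def Zint (β γ : ℝ) : ℝ :=
  γ ^ (2 / β) * ∫ y in Set.Ioi (γ ^ (-(2 / β))), 1 / (1 + y ^ (β / 2))

/-!
Substituting y = u γ^{-2/β} gives Z(γ) = ∫_1^∞ γ / (γ + u^{β/2}) du for every γ ≥ 0. The integrand
is strictly increasing in γ and bounded by (γ₀ + 1) u^{-β/2} for γ ≤ γ₀ + 1, which yields strict
monotonicity and, by dominated convergence, continuity. On the other hand
Z(γ)/γ^{2/β} = ∫_{γ^{-2/β}}^∞ dy / (1 + y^{β/2}) increases to the integral over (0, ∞) as γ → ∞,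
and with p = β/2 that integral is Γ(1 + 1/p) Γ(1 - 1/p): write 1/(1 + y^p) = ∫_0^∞ e^{-(1+y^p)t} dt,
swap the integrals, and use ∫_0^∞ e^{-t y^p} dy = t^{-1/p} Γ(1 + 1/p).
-/

open Topology

theorem setIntegral_lt_setIntegral_of_forall_lt {α : Type*} [MeasurableSpace α] {μ : Measure α}
    {s : Set α} {f g : α → ℝ} (hs : MeasurableSet s) (hμs : μ s ≠ 0)
    (hf : IntegrableOn f s μ) (hg : IntegrableOn g s μ) (hlt : ∀ x ∈ s, f x < g x) :
    ∫ x in s, f x ∂μ < ∫ x in s, g x ∂μ := by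
  rw [← sub_pos, ← integral_sub hg hf]
  refine (setIntegral_pos_iff_support_of_nonneg_ae ?_ (hg.sub hf)).2 ?_
  · filter_upwards [ae_restrict_mem hs] with x hx using (sub_pos.2 (hlt x hx)).le
  · have hsupp : Function.support (g - f) ∩ s = s :=
      inter_eq_right.2 fun x hx => (sub_pos.2 (hlt x hx)).ne'
    rwa [hsupp, pos_iff_ne_zero]

theorem tendsto_setIntegral_Ioi_nhdsGT {E : Type*} [NormedAddCommGroup E] [NormedSpace ℝ E]
    {f : ℝ → E} {a : ℝ} (hf : IntegrableOn f (Ioi a)) :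
    Tendsto (fun c => ∫ x in Ioi c, f x) (𝓝[>] a) (𝓝 (∫ x in Ioi a, f x)) := by
  -- `Ioc a c` is measured by `volume.restrict (Ioi a)`, where `f` is integrable, so that
  -- absolute continuity of the integral applies.
  have hsplit : ∀ c ∈ Ioi a,
      ∫ x in Ioi c, f x = (∫ x in Ioi a, f x) - ∫ x in Ioc a c, f x ∂volume.restrict (Ioi a) := by
    intro c hc
    rw [Measure.restrict_restrict measurableSet_Ioc, inter_eq_left.2 Ioc_subset_Ioi_self,
      ← Ioc_union_Ioi_eq_Ioi (mem_Ioi.1 hc).le, setIntegral_union (Ioc_disjoint_Ioi le_rfl)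
        measurableSet_Ioi (hf.mono_set Ioc_subset_Ioi_self)
        (hf.mono_set (Ioi_subset_Ioi (mem_Ioi.1 hc).le))]
    abel
  have hIoc : Tendsto (fun c => volume.restrict (Ioi a) (Ioc a c)) (𝓝[>] a) (𝓝 0) := by
    have h0 : Tendsto (fun c : ℝ => c - a) (𝓝[>] a) (𝓝 0) :=
      ((continuous_id.sub continuous_const).tendsto' a 0 (sub_self a)).mono_left
        nhdsWithin_le_nhds
    have : Tendsto (fun c => ENNReal.ofReal (c - a)) (𝓝[>] a) (𝓝 0) := by
      simpa using ENNReal.tendsto_ofReal h0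
    refine this.congr fun c => ?_
    rw [Measure.restrict_apply measurableSet_Ioc, inter_eq_left.2 Ioc_subset_Ioi_self,
      Real.volume_Ioc]
  have hlim := (tendsto_const_nhds (x := ∫ x in Ioi a, f x)).sub
    (hf.tendsto_setIntegral_nhds_zero hIoc)
  rw [sub_zero] at hlim
  exact hlim.congr' (eventually_nhdsWithin_of_forall fun c hc => (hsplit c hc).symm)

section OneDivOneAddRpow

variable {p : ℝ}

theorem lintegral_exp_neg_mul_Ioi {c : ℝ} (hc : 0 < c) :
    ∫⁻ t in Ioi (0 : ℝ), ENNReal.ofReal (exp (-c * t)) = ENNReal.ofReal c⁻¹ := by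
  rw [← ofReal_integral_eq_lintegral_ofReal (integrableOn_exp_mul_Ioi (neg_lt_zero.2 hc) 0)
    (ae_of_all _ fun t => (exp_pos _).le), integral_exp_mul_Ioi (neg_lt_zero.2 hc)]
  simp

theorem lintegral_exp_neg_mul_rpow_Ioi (hp : 0 < p) {b : ℝ} (hb : 0 < b) :
    ∫⁻ y in Ioi (0 : ℝ), ENNReal.ofReal (exp (-b * y ^ p))
      = ENNReal.ofReal (b ^ (-1 / p) * Gamma (1 / p + 1)) := by
  rw [← integral_exp_neg_mul_rpow hp hb,
    ofReal_integral_eq_lintegral_ofReal _ (ae_of_all _ fun y => (exp_pos _).le)]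
  have hint : IntegrableOn (fun y : ℝ => exp (-b * y ^ p)) (Ioi 0) := by
    simpa using integrableOn_rpow_mul_exp_neg_mul_rpow (s := 0) neg_one_lt_zero hp hb
  exact hint

theorem measurable_one_div_one_add_rpow (p : ℝ) : Measurable fun y : ℝ => 1 / (1 + y ^ p) := by
  fun_prop

theorem one_div_one_add_rpow_nonneg_ae :
    0 ≤ᵐ[volume.restrict (Ioi (0 : ℝ))] fun y : ℝ => 1 / (1 + y ^ p) := by
  filter_upwards [ae_restrict_mem measurableSet_Ioi] with y hy
  have := rpow_nonneg (le_of_lt hy) p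
  positivity

theorem lintegral_one_div_one_add_rpow (hp : 1 < p) :
    ∫⁻ y in Ioi (0 : ℝ), ENNReal.ofReal (1 / (1 + y ^ p))
      = ENNReal.ofReal (Gamma (1 + 1 / p) * Gamma (1 - 1 / p)) := by
  have hp0 : 0 < p := by linarith
  have hq : 0 < 1 - 1 / p := by rw [sub_pos, div_lt_one hp0]; exact hp
  calc ∫⁻ y in Ioi (0 : ℝ), ENNReal.ofReal (1 / (1 + y ^ p))
      = ∫⁻ y in Ioi (0 : ℝ), ∫⁻ t in Ioi (0 : ℝ), ENNReal.ofReal (exp (-(1 + y ^ p) * t)) := by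
        refine setLIntegral_congr_fun measurableSet_Ioi fun y hy => ?_
        have := rpow_nonneg (le_of_lt hy) p
        rw [lintegral_exp_neg_mul_Ioi (by positivity), one_div]
    _ = ∫⁻ t in Ioi (0 : ℝ), ∫⁻ y in Ioi (0 : ℝ), ENNReal.ofReal (exp (-(1 + y ^ p) * t)) :=
        lintegral_lintegral_swap (by fun_prop)
    _ = ∫⁻ t in Ioi (0 : ℝ), ENNReal.ofReal (exp (-t) * t ^ ((1 - 1 / p) - 1))
          * ENNReal.ofReal (Gamma (1 / p + 1)) := by
        refine setLIntegral_congr_fun measurableSet_Ioi fun t ht => ?_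
        have hsplit : ∀ y : ℝ, ENNReal.ofReal (exp (-(1 + y ^ p) * t))
            = ENNReal.ofReal (exp (-t)) * ENNReal.ofReal (exp (-t * y ^ p)) := fun y => by
          rw [← ENNReal.ofReal_mul (exp_pos _).le, ← exp_add]
          ring_nf
        simp_rw [hsplit]
        rw [lintegral_const_mul _ (by fun_prop), lintegral_exp_neg_mul_rpow_Ioi hp0 ht,
          ← ENNReal.ofReal_mul (exp_pos _).le,
          ← ENNReal.ofReal_mul (mul_nonneg (exp_pos _).le (rpow_nonneg (le_of_lt ht) _)),
          show (1 - 1 / p) - 1 = -1 / p by ring, mul_assoc]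
    _ = ENNReal.ofReal (Gamma (1 + 1 / p) * Gamma (1 - 1 / p)) := by
        rw [lintegral_mul_const _ (by fun_prop), ← ofReal_integral_eq_lintegral_ofReal
          (GammaIntegral_convergent hq), ← Gamma_eq_integral hq,
          ← ENNReal.ofReal_mul (Gamma_pos_of_pos hq).le, add_comm, mul_comm]
        filter_upwards [ae_restrict_mem measurableSet_Ioi] with t ht
        exact mul_nonneg (exp_pos _).le (rpow_nonneg (le_of_lt ht) _)

theorem integrableOn_one_div_one_add_rpow (hp : 1 < p) :
    IntegrableOn (fun y : ℝ => 1 / (1 + y ^ p)) (Ioi 0) := by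
  refine ⟨(measurable_one_div_one_add_rpow p).aestronglyMeasurable,
    (hasFiniteIntegral_iff_ofReal one_div_one_add_rpow_nonneg_ae).2 ?_⟩
  rw [lintegral_one_div_one_add_rpow hp]
  exact ENNReal.ofReal_lt_top

theorem integral_one_div_one_add_rpow (hp : 1 < p) :
    ∫ y in Ioi (0 : ℝ), 1 / (1 + y ^ p) = Gamma (1 + 1 / p) * Gamma (1 - 1 / p) := by
  have hq : 0 < 1 - 1 / p := by rw [sub_pos, div_lt_one (by linarith)]; exact hp
  rw [integral_eq_lintegral_of_nonneg_ae one_div_one_add_rpow_nonneg_ae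
      (measurable_one_div_one_add_rpow p).aestronglyMeasurable,
    lintegral_one_div_one_add_rpow hp,
    ENNReal.toReal_ofReal
      (mul_nonneg (Gamma_pos_of_pos (by positivity)).le (Gamma_pos_of_pos hq).le)]

end OneDivOneAddRpow

section DivAddRpow

variable {p γ : ℝ}

theorem div_add_rpow_le_mul_rpow_neg (hγ : 0 ≤ γ) {u : ℝ} (hu : 0 < u) :
    γ / (γ + u ^ p) ≤ γ * u ^ (-p) := by
  have hup := rpow_pos_of_pos hu p
  rw [rpow_neg hu.le, ← div_eq_mul_inv]
  gcongr
  linarith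

theorem integrableOn_div_add_rpow (hp : 1 < p) (hγ : 0 ≤ γ) :
    IntegrableOn (fun u : ℝ => γ / (γ + u ^ p)) (Ioi 1) := by
  refine Integrable.mono' ((integrableOn_Ioi_rpow_of_lt (neg_lt_neg hp) one_pos).const_mul γ)
    (by fun_prop : Measurable fun u : ℝ => γ / (γ + u ^ p)).aestronglyMeasurable ?_
  filter_upwards [ae_restrict_mem measurableSet_Ioi] with u hu
  have hu0 : 0 < u := one_pos.trans hu
  rw [norm_of_nonneg (div_nonneg hγ (by have := rpow_pos_of_pos hu0 p; positivity))]
  exact div_add_rpow_le_mul_rpow_neg hγ hu0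

theorem continuousOn_integral_div_add_rpow (hp : 1 < p) :
    ContinuousOn (fun γ : ℝ => ∫ u in Ioi 1, γ / (γ + u ^ p)) (Ici 0) := by
  intro γ₀ hγ₀
  refine continuousWithinAt_of_dominated (bound := fun u => (γ₀ + 1) * u ^ (-p))
    (Eventually.of_forall fun γ =>
      (by fun_prop : Measurable fun u : ℝ => γ / (γ + u ^ p)).aestronglyMeasurable) ?_
    ((integrableOn_Ioi_rpow_of_lt (neg_lt_neg hp) one_pos).const_mul _) ?_
  · filter_upwards [self_mem_nhdsWithin,
      nhdsWithin_le_nhds (eventually_lt_nhds (lt_add_one γ₀))] with γ (hγ : 0 ≤ γ) hγ₁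
    filter_upwards [ae_restrict_mem measurableSet_Ioi] with u hu
    have hu0 : 0 < u := one_pos.trans hu
    have hup := rpow_pos_of_pos hu0 p
    rw [norm_of_nonneg (by positivity)]
    exact (div_add_rpow_le_mul_rpow_neg hγ hu0).trans (by gcongr)
  · filter_upwards [ae_restrict_mem measurableSet_Ioi] with u hu
    have hup := rpow_pos_of_pos (one_pos.trans hu) p
    have : (0 : ℝ) ≤ γ₀ := hγ₀
    exact (continuousAt_id.div (continuousAt_id.add continuousAt_const)
      (show γ₀ + u ^ p ≠ 0 by positivity)).continuousWithinAt

theorem strictMonoOn_integral_div_add_rpow (hp : 1 < p) :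
    StrictMonoOn (fun γ : ℝ => ∫ u in Ioi 1, γ / (γ + u ^ p)) (Ici 0) := by
  intro a (ha : 0 ≤ a) b (hb : 0 ≤ b) hab
  refine setIntegral_lt_setIntegral_of_forall_lt measurableSet_Ioi (by simp)
    (integrableOn_div_add_rpow hp ha) (integrableOn_div_add_rpow hp hb) fun u hu => ?_
  have hup := rpow_pos_of_pos (one_pos.trans hu) p
  rw [div_lt_div_iff₀ (by positivity) (by positivity)]
  nlinarith

end DivAddRpow

section Zint

variable {β γ : ℝ}

theorem Zint_zero (hβ : β ≠ 0) : Zint β 0 = 0 := by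
  simp [Zint, zero_rpow (div_ne_zero two_ne_zero hβ)]

theorem Zint_eq_integral_div_add_rpow (hβ : β ≠ 0) (hγ : 0 ≤ γ) :
    Zint β γ = ∫ u in Ioi 1, γ / (γ + u ^ (β / 2)) := by
  rcases hγ.eq_or_lt with rfl | hγ
  · simp [Zint_zero hβ]
  have hc : 0 < γ ^ (-(2 / β)) := rpow_pos_of_pos hγ _
  have hcp : (γ ^ (-(2 / β))) ^ (β / 2) = γ⁻¹ := by
    rw [← rpow_mul hγ.le, show -(2 / β) * (β / 2) = -1 by field_simp, rpow_neg_one]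
  rw [Zint, ← one_mul (γ ^ (-(2 / β))), ← integral_comp_mul_right_Ioi' _ _ hc, smul_eq_mul,
    ← mul_assoc, ← rpow_add hγ, add_neg_cancel, rpow_zero, one_mul]
  refine setIntegral_congr_fun measurableSet_Ioi fun u hu => ?_
  have hu0 : 0 < u := one_pos.trans hu
  have hup := rpow_pos_of_pos hu0 (β / 2)
  rw [mul_rpow hu0.le hc.le, hcp]
  field_simp

theorem Gamma_mul_Gamma_two_div_eq_integral (hβ : 2 < β) :
    Gamma (1 + 2 / β) * Gamma (1 - 2 / β) = ∫ y in Ioi (0 : ℝ), 1 / (1 + y ^ (β / 2)) := by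
  rw [integral_one_div_one_add_rpow (by linarith), one_div_div]

theorem Zint_le (hβ : 2 < β) (hγ : 0 ≤ γ) :
    Zint β γ ≤ Gamma (1 + 2 / β) * Gamma (1 - 2 / β) * γ ^ (2 / β) := by
  have hp : 1 < β / 2 := by linarith
  rw [Zint, mul_comm _ (γ ^ _), Gamma_mul_Gamma_two_div_eq_integral hβ]
  exact mul_le_mul_of_nonneg_left (setIntegral_mono_set (integrableOn_one_div_one_add_rpow hp)
    one_div_one_add_rpow_nonneg_ae (Ioi_subset_Ioi (rpow_nonneg hγ _)).eventuallyLE)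
    (rpow_nonneg hγ _)

theorem tendsto_Zint_div_rpow (hβ : 2 < β) :
    Tendsto (fun γ => Zint β γ / γ ^ (2 / β)) atTop
      (𝓝 (Gamma (1 + 2 / β) * Gamma (1 - 2 / β))) := by
  have hp : 1 < β / 2 := by linarith
  have hc : Tendsto (fun γ : ℝ => γ ^ (-(2 / β))) atTop (𝓝[>] 0) :=
    tendsto_nhdsWithin_iff.2 ⟨tendsto_rpow_neg_atTop (by positivity),
      eventually_gt_atTop 0 |>.mono fun γ hγ => rpow_pos_of_pos hγ _⟩
  rw [Gamma_mul_Gamma_two_div_eq_integral hβ]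
  refine ((tendsto_setIntegral_Ioi_nhdsGT (integrableOn_one_div_one_add_rpow hp)).comp hc).congr'
    ?_
  filter_upwards [eventually_gt_atTop 0] with γ hγ
  exact (mul_div_cancel_left₀ _ (rpow_pos_of_pos hγ _).ne').symm

end Zint

/-- Z is continuous and strictly increasing on [0,∞), is dominated by the
no-guard-zone exponent Γ(1+2/β)Γ(1-2/β) γ^{2/β}, and is asymptotically equivalent
to it as γ → ∞. -/
theorem Zint_properties (β : ℝ) (hβ : 2 < β) :
    ContinuousOn (Zint β) (Set.Ici 0) ∧
    StrictMonoOn (Zint β) (Set.Ici 0) ∧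
    (∀ γ, 0 ≤ γ →
      Zint β γ ≤ Real.Gamma (1 + 2 / β) * Real.Gamma (1 - 2 / β) * γ ^ (2 / β)) ∧
    Tendsto (fun γ => Zint β γ / γ ^ (2 / β)) atTop
      (nhds (Real.Gamma (1 + 2 / β) * Real.Gamma (1 - 2 / β))) := by
  have hp : 1 < β / 2 := by linarith
  have hZ : EqOn (Zint β) (fun γ => ∫ u in Ioi 1, γ / (γ + u ^ (β / 2))) (Ici 0) :=
    fun _ hγ => Zint_eq_integral_div_add_rpow (by positivity) hγ
  exact ⟨(continuousOn_integral_div_add_rpow hp).congr hZ,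
    (strictMonoOn_integral_div_add_rpow hp).congr hZ.symm, fun _ hγ => Zint_le hβ hγ,
    tendsto_Zint_div_rpow hβ⟩
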